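/- Let n ≥ 2 and let B : V → End(V) be a linear map such that (X,Y,Z) ↦ Ω(B(X)Y,Z) is totally symmetric, encoding a translation-invariant symplectic connection on (ℝ^{2n},Ω). If this connection is of Ricci type, then B(X)∘B(Y) = 0 for all X,Y ∈ V; in particular its curvature R(X,Y) = B(X)∘B(Y) − B(Y)∘B(X) vanishes identically (the connection is flat) and its Ricci tensor r(X,Y) = Tr(B(X)∘B(Y)) is zero. -/

import Mathlib

noncomputable section

/-- The standard symplectic form `Ω(x,y) = Σ_{i=1}^{n} (x_i·y_{n+i} − x_{n+i}·y_i)`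
on `ℝ^{2n}`. -/
def Omega (n : ℕ) (x y : Fin (2*n) → ℝ) : ℝ :=
  ∑ i : Fin n, (x ⟨i.1, by have := i.isLt; omega⟩ * y ⟨n + i.1, by have := i.isLt; omega⟩
    - x ⟨n + i.1, by have := i.isLt; omega⟩ * y ⟨i.1, by have := i.isLt; omega⟩)

/-!
Let `ρ` be the endomorphism with `ω (ρ X) Y = r X Y`. The Ricci-type condition says that the
curvature `⁅B X, B Y⁆` is `c` times an explicit tensor built from `ω` and `ρ`. Invariance of the
trace, `tr (B Z ⁅B X, B Y⁆) = tr (B Y ⁅B Z, B X⁆)`, contracted with `ω`, forces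
`tr (B Z ∘ ρ) = 0`, and then `ρ` anticommutes with every `B X`. With this, the Jacobi identity
for the `B X` collapses to `Σ_cyc ω Y Z • B X (ρ W) = 0`; taking `Y`, `Z` orthogonal to `X`
with `ω Y Z ≠ 0` (possible in dimension at least 4) gives `B X ∘ ρ = 0`. So `B (ρ W) = 0`, and
the Ricci-type condition at `(ρ W, W, W, W)` reads `4 c r(W,W)² = 0`; hence `r = 0`, the
curvature vanishes, and `ω (B X (B Y Z)) T`, symmetric in `Y, Z` and skew in `Z, T`, is zero.
-/

open LinearMap (BilinForm trace)
open Module (finrank)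

theorem eq_zero_of_symm_of_antisymm {α R : Type*} [Ring R] [NoZeroDivisors R] [CharZero R]
    {f : α → α → α → R} (h₁₂ : ∀ a b c, f a b c = f b a c) (h₂₃ : ∀ a b c, f a b c = -f a c b)
    (a b c : α) : f a b c = 0 := by
  have h : f a b c = -f a b c := calc
    f a b c = -f b c a := by rw [h₁₂, h₂₃]
    _ = f c a b := by rw [h₁₂ b, h₂₃ c, neg_neg]
    _ = -f a b c := by rw [h₁₂, h₂₃]
  exact add_self_eq_zero.1 (eq_neg_iff_add_eq_zero.1 h)

lemma LinearMap.trace_mul_lie {K V : Type*} [Field K] [AddCommGroup V] [Module K V]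
    (a b c : Module.End K V) : trace K V (c * ⁅a, b⁆) = trace K V (b * ⁅c, a⁆) := by
  simp only [Ring.lie_def, mul_sub, map_sub, ← mul_assoc]
  rw [LinearMap.trace_mul_comm K (c * a) b, LinearMap.trace_mul_comm K (b * a) c]
  simp only [mul_assoc]

namespace LinearMap.BilinForm

variable {K V : Type*} [Field K] [AddCommGroup V] [Module K V] [FiniteDimensional K V]
  {ω : BilinForm K V}

theorem trace_eq_zero_of_skew [CharZero K] (hω : ω.Nondegenerate) {A : Module.End K V}
    (hA : ∀ u v, ω (A u) v = -ω u (A v)) : trace K V A = 0 := by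
  set e := ω.toDual hω
  have hconj : A = -(e.symm.conj (Module.Dual.transpose A)) := by
    ext x
    apply e.injective
    ext v
    simp [LinearEquiv.conj_apply, e, toDual_def, hA, Module.Dual.transpose_apply]
  have htr := congrArg (trace K V) hconj
  rw [map_neg, LinearMap.trace_conj', LinearMap.trace_transpose', eq_neg_iff_add_eq_zero] at htr
  exact add_self_eq_zero.1 htr

theorem exists_orthogonal_pair (hω : ω.SeparatingLeft) (hωa : ω.IsAlt)
    (hdim : 2 < finrank K V) {X : V} (hX : X ≠ 0) :
    ∃ Y Z, ω X Y = 0 ∧ ω X Z = 0 ∧ ω Y Z ≠ 0 := by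
  obtain ⟨u, hu⟩ : ∃ u, ω X u ≠ 0 := by
    by_contra! h
    exact hX (hω X h)
  set W := (ω X u)⁻¹ • u
  have hW : ω X W = 1 := by simp [W, hu]
  obtain ⟨Y, hY, hY0⟩ := Submodule.exists_mem_ne_zero_of_ne_bot
    (LinearMap.ker_ne_bot_of_finrank_lt (f := (ω X).prod (ω W)) (by simpa using hdim))
  simp only [LinearMap.mem_ker, LinearMap.prod_apply, Function.prod, Prod.mk_eq_zero] at hY
  obtain ⟨v, hv⟩ : ∃ v, ω Y v ≠ 0 := by
    by_contra! h
    exact hY0 (hω Y h)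
  refine ⟨Y, v - ω X v • W, hY.1, by simp [hW], ?_⟩
  have hYW : ω Y W = 0 := by rw [← hωa.neg_eq, hY.2, neg_zero]
  simpa [hYW] using hv

end LinearMap.BilinForm

namespace InvariantSymplecticConnection

variable {K V : Type*} [Field K] [AddCommGroup V] [Module K V] {ω : BilinForm K V}
  {B : V →ₗ[K] Module.End K V}

def ricci (B : V →ₗ[K] Module.End K V) : BilinForm K V :=
  ((LinearMap.mul K (Module.End K V)).compl₁₂ B B).compr₂ (trace K V)

lemma ricci_comm (X Y : V) : ricci B X Y = ricci B Y X := LinearMap.trace_mul_comm K _ _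

def IsRicciType (ω : BilinForm K V) (B : V →ₗ[K] Module.End K V) (c : K) : Prop :=
  ∀ X Y Z T, ω (⁅B X, B Y⁆ Z) T = c * (2 * ω X Y * ricci B Z T + ω X Z * ricci B Y T
    + ω X T * ricci B Y Z - ω Y Z * ricci B X T - ω Y T * ricci B X Z)

/-- When `ω (ρ X) Y = ricci B X Y`, `ω (ricciTypeCurvature ω ρ X Y Z) T` is the bracketed
expression of the Ricci-type condition. -/
def ricciTypeCurvature (ω : BilinForm K V) (ρ : Module.End K V) (X Y : V) : Module.End K V :=
  (2 * ω X Y) • ρ + (ω X).smulRight (ρ Y) + (ω (ρ Y)).smulRight X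
    - (ω Y).smulRight (ρ X) - (ω (ρ X)).smulRight Y

lemma ricciTypeCurvature_apply (ρ : Module.End K V) (X Y Z : V) :
    ricciTypeCurvature ω ρ X Y Z = (2 * ω X Y) • ρ Z + ω X Z • ρ Y + ω (ρ Y) Z • X
      - ω Y Z • ρ X - ω (ρ X) Z • Y := rfl

variable (hω : ω.Nondegenerate) (hωa : ω.IsAlt)
  (hB₁ : ∀ X Y Z, ω (B X Y) Z = ω (B Y X) Z) (hB₂ : ∀ X Y Z, ω (B X Y) Z = ω (B X Z) Y)

include hω hB₁ in
lemma apply_comm (X Y : V) : B X Y = B Y X :=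
  sub_eq_zero.1 <| hω.1 _ fun Z => by simp [hB₁ X Y Z]

include hωa hB₂ in
lemma apply_skew (X u v : V) : ω (B X u) v = -ω u (B X v) := by
  rw [hB₂, ← hωa.neg_eq (B X v), neg_neg]

include hω hωa hB₁ hB₂ in
lemma mul_eq_zero_of_lie_eq_zero [CharZero K] (hlie : ∀ X Y, ⁅B X, B Y⁆ = 0) (X Y : V) :
    B X * B Y = 0 := by
  have hswap : ∀ X Y v, B X (B Y v) = B Y (B X v) := fun X Y v => by
    simpa [Ring.lie_def, sub_eq_zero] using LinearMap.congr_fun (hlie X Y) v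
  ext Z
  refine hω.1 _ fun T => eq_zero_of_symm_of_antisymm (f := fun Y Z T => ω (B X (B Y Z)) T)
    (fun Y Z T => by rw [apply_comm hω hB₁ Y Z]) (fun Y Z T => ?_) Y Z T
  rw [apply_skew hωa hB₂ X, apply_skew hωa hB₂ Y, neg_neg, ← hωa.neg_eq _ Z, hswap Y]

variable [FiniteDimensional K V]

include hωa in
lemma trace_mul_ricciTypeCurvature {A : Module.End K V} (hA : ∀ u v, ω (A u) v = -ω u (A v))
    (ρ : Module.End K V) (X Y : V) :
    trace K V (A * ricciTypeCurvature ω ρ X Y)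
      = 2 * (ω X Y * trace K V (A * ρ) - ω (A X) (ρ Y) + ω (A Y) (ρ X)) := by
  have hcomp : ∀ (f : Module.Dual K V) v, A * f.smulRight v = f.smulRight (A v) := by
    intro f v; ext; simp
  simp only [ricciTypeCurvature, mul_add, mul_sub, mul_smul_comm, hcomp, map_add, map_sub,
    map_smul, LinearMap.trace_smulRight, smul_eq_mul]
  linear_combination hA X (ρ Y) - hωa.neg_eq (A X) (ρ Y) - hA Y (ρ X) + hωa.neg_eq (A Y) (ρ X)

def ricciEnd (hω : ω.Nondegenerate) (B : V →ₗ[K] Module.End K V) : Module.End K V :=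
  (ω.toDual hω).symm.toLinearMap ∘ₗ ricci B

def traceMulRicciEnd (hω : ω.Nondegenerate) (B : V →ₗ[K] Module.End K V) : V →ₗ[K] K :=
  trace K V ∘ₗ LinearMap.mulRight K (ricciEnd hω B) ∘ₗ B

local notation "ρ" => ricciEnd hω B
local notation "τ" => traceMulRicciEnd hω B

@[simp]
lemma ricciEnd_spec (X Y : V) : ω (ρ X) Y = ricci B X Y :=
  LinearMap.BilinForm.apply_toDual_symm_apply (hB := hω) _ _

lemma traceMulRicciEnd_apply (Z : V) : τ Z = trace K V (B Z * ρ) := rfl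

include hωa in
lemma ricciEnd_skew (u v : V) : ω (ρ u) v = -ω u (ρ v) := by
  rw [hωa.neg_eq, ricciEnd_spec, ricciEnd_spec, ricci_comm]

variable {c : K} (hR : IsRicciType ω B c)

include hR in
lemma lie_eq_smul_ricciTypeCurvature (X Y : V) :
    ⁅B X, B Y⁆ = c • ricciTypeCurvature ω ρ X Y := by
  ext Z
  refine sub_eq_zero.1 <| hω.1 _ fun T => ?_
  simp only [map_sub, LinearMap.sub_apply, LinearMap.smul_apply, map_smul, smul_eq_mul,
    ricciTypeCurvature_apply, map_add, LinearMap.add_apply, ricciEnd_spec]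
  rw [hR]
  ring

variable [CharZero K] (hc : c ≠ 0)

include hR hc hωa hB₂ in
lemma cyclic_trace_identity (X Y Z : V) :
    ω X Y * τ Z - ω (B Z X) (ρ Y) + ω (B Z Y) (ρ X)
      = ω Z X * τ Y - ω (B Y Z) (ρ X) + ω (B Y X) (ρ Z) := by
  have h := LinearMap.trace_mul_lie (B X) (B Y) (B Z)
  simp only [lie_eq_smul_ricciTypeCurvature hω hR, mul_smul_comm, map_smul, smul_eq_mul,
    trace_mul_ricciTypeCurvature hωa (apply_skew hωa hB₂ _)] at h
  rw [traceMulRicciEnd_apply, traceMulRicciEnd_apply]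
  exact mul_left_cancel₀ (mul_ne_zero hc two_ne_zero) (by linear_combination h)

include hR hc hωa hB₁ hB₂ in
lemma traceMulRicciEnd_eq_zero (Z : V) : τ Z = 0 := by
  -- `cyclic_trace_identity` at fixed `Z`, rewritten as `ω X (E Y) = 0` for the `E` below
  have hE : τ Z • 1 + B Z * ρ + (2 : K) • (ρ * B Z) + (τ).smulRight Z + B (ρ Z) = 0 := by
    ext Y
    refine hω.2 _ fun X => ?_
    simp only [LinearMap.add_apply, Module.End.mul_apply, LinearMap.smul_apply,
      Module.End.one_apply, LinearMap.smulRight_apply, map_add, map_smul, smul_eq_mul,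
      apply_comm hω hB₁ (ρ Z) Y]
    have h := cyclic_trace_identity hω hωa hB₂ hR hc X Y Z
    rw [apply_comm hω hB₁ Y Z] at h
    linear_combination h
      + apply_skew hωa hB₂ Z X (ρ Y) + apply_skew hωa hB₂ Y X (ρ Z) - τ Y * hωa.neg_eq Z X
      + 2 * ricciEnd_skew hω hωa X (B Z Y) + 2 * hωa.neg_eq (ρ X) (B Z Y)
  have htr := congrArg (trace K V) hE
  simp only [map_add, map_smul, LinearMap.trace_one, smul_eq_mul, LinearMap.trace_smulRight,
    LinearMap.trace_mul_comm K ρ, ← traceMulRicciEnd_apply, map_zero,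
    LinearMap.BilinForm.trace_eq_zero_of_skew hω (apply_skew hωa hB₂ _)] at htr
  have hd : (finrank K V : K) + 4 ≠ 0 := by norm_cast
  exact (mul_eq_zero.1 (by linear_combination htr)).resolve_left hd

include hR hc hωa hB₁ hB₂ in
lemma apply_ricciEnd_symm (X Y Z : V) : ω (B X Y) (ρ Z) = ω (B X Z) (ρ Y) := by
  have h₁ := cyclic_trace_identity hω hωa hB₂ hR hc X Y Z
  have h₂ := cyclic_trace_identity hω hωa hB₂ hR hc Y X Z
  simp only [traceMulRicciEnd_eq_zero hω hωa hB₁ hB₂ hR hc, mul_zero,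
    apply_comm hω hB₁ Z, apply_comm hω hB₁ Y X] at h₁ h₂
  linear_combination (-1 / 3 : K) * h₁ - (2 / 3 : K) * h₂

include hR hc hωa hB₁ hB₂ in
lemma ricciEnd_apply_anticomm (X v : V) : ρ (B X v) = -B X (ρ v) := by
  refine eq_neg_of_add_eq_zero_left <| hω.1 _ fun w => ?_
  rw [map_add, LinearMap.add_apply, ricciEnd_skew hω hωa, hB₂ X (ρ v),
    apply_ricciEnd_symm hω hωa hB₁ hB₂ hR hc X w v, neg_add_cancel]

include hR hc hωa hB₁ hB₂ in
lemma apply_ricciEnd_comm (X Z : V) : B X (ρ Z) = B Z (ρ X) := by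
  rw [← neg_neg (B X (ρ Z)), ← ricciEnd_apply_anticomm hω hωa hB₁ hB₂ hR hc,
    apply_comm hω hB₁ X Z, ricciEnd_apply_anticomm hω hωa hB₁ hB₂ hR hc, neg_neg]

include hR hc hωa hB₁ hB₂ in
lemma cyclic_apply_ricciEnd (X Y Z W : V) :
    ω Y Z • B X (ρ W) + ω Z X • B Y (ρ W) + ω X Y • B Z (ρ W) = 0 := by
  have hjac : ⁅B X, ricciTypeCurvature ω ρ Y Z⁆ + ⁅B Y, ricciTypeCurvature ω ρ Z X⁆
      + ⁅B Z, ricciTypeCurvature ω ρ X Y⁆ = 0 := by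
    have h : ⁅B X, ⁅B Y, B Z⁆⁆ + ⁅B Y, ⁅B Z, B X⁆⁆ + ⁅B Z, ⁅B X, B Y⁆⁆ = 0 := by
      simp only [Ring.lie_def]
      noncomm_ring
    simp only [lie_eq_smul_ricciTypeCurvature hω hR, Ring.lie_def, mul_smul_comm, smul_mul_assoc,
      ← smul_sub, ← smul_add] at h
    exact (smul_eq_zero.1 h).resolve_left hc
  have hskew : ∀ X u v, ω u (B X v) = -ω (B X u) v := fun X u v => by
    rw [apply_skew hωa hB₂, neg_neg]
  have h := LinearMap.congr_fun hjac W
  simp only [LinearMap.add_apply, Ring.lie_def, LinearMap.sub_apply, Module.End.mul_apply,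
    ricciTypeCurvature_apply, map_add, map_sub, map_smul, hskew,
    ricciEnd_apply_anticomm hω hωa hB₁ hB₂ hR hc, LinearMap.zero_apply] at h
  rw [apply_ricciEnd_comm hω hωa hB₁ hB₂ hR hc Y X, apply_ricciEnd_comm hω hωa hB₁ hB₂ hR hc Z Y,
    apply_ricciEnd_comm hω hωa hB₁ hB₂ hR hc X Z, apply_comm hω hB₁ Y X, apply_comm hω hB₁ Z Y,
    apply_comm hω hB₁ X Z] at h
  linear_combination (norm := module) (4 : K)⁻¹ • h

variable (hdim : 2 < finrank K V)

include hR hc hdim hωa hB₁ hB₂ in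
lemma apply_ricciEnd_eq_zero (X W : V) : B X (ρ W) = 0 := by
  rcases eq_or_ne X 0 with rfl | hX
  · simp
  obtain ⟨Y, Z, hY, hZ, hYZ⟩ := ω.exists_orthogonal_pair hω.1 hωa hdim hX
  have h := cyclic_apply_ricciEnd hω hωa hB₁ hB₂ hR hc X Y Z W
  rw [← hωa.neg_eq X Z, hZ, hY, neg_zero, zero_smul, zero_smul, add_zero, add_zero] at h
  exact (smul_eq_zero.1 h).resolve_left hYZ

include hω hR hc hdim hωa hB₁ hB₂ in
lemma ricci_self_eq_zero (W : V) : ricci B W W = 0 := by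
  have hBρ : B (ρ W) = 0 := LinearMap.ext fun X => by
    rw [apply_comm hω hB₁, apply_ricciEnd_eq_zero hω hωa hB₁ hB₂ hR hc hdim, LinearMap.zero_apply]
  have h := hR (ρ W) W W W
  simp only [hBρ, Ring.lie_def, zero_mul, mul_zero, sub_zero, LinearMap.zero_apply, map_zero,
    hωa.self_eq_zero, ricciEnd_spec] at h
  have h4 : c * 4 * ricci B W W ^ 2 = 0 := by linear_combination -h
  simpa [hc] using h4

include hω hR hc hdim hωa hB₁ hB₂ in
lemma ricci_eq_zero (X Y : V) : ricci B X Y = 0 := by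
  have h := ricci_self_eq_zero hω hωa hB₁ hB₂ hR hc hdim (X + Y)
  simp only [map_add, LinearMap.add_apply, ricci_self_eq_zero hω hωa hB₁ hB₂ hR hc hdim,
    ricci_comm Y X] at h
  exact (mul_eq_zero.1 (by linear_combination h : (2 : K) * ricci B X Y = 0)).resolve_left
    two_ne_zero

include hω hR hc hdim hωa hB₁ hB₂ in
lemma lie_eq_zero (X Y : V) : ⁅B X, B Y⁆ = 0 := by
  ext Z
  rw [LinearMap.zero_apply]
  refine hω.1 _ fun T => ?_
  simp [hR X Y Z T, ricci_eq_zero hω hωa hB₁ hB₂ hR hc hdim]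

include hω hR hc hdim hωa hB₁ hB₂ in
theorem flat_of_isRicciType :
    (∀ X Y, B X * B Y = 0) ∧ (∀ X Y, ⁅B X, B Y⁆ = 0) ∧ (∀ X Y, ricci B X Y = 0) :=
  ⟨mul_eq_zero_of_lie_eq_zero hω hωa hB₁ hB₂ (lie_eq_zero hω hωa hB₁ hB₂ hR hc hdim),
    lie_eq_zero hω hωa hB₁ hB₂ hR hc hdim, ricci_eq_zero hω hωa hB₁ hB₂ hR hc hdim⟩

end InvariantSymplecticConnection

def omegaForm (n : ℕ) : BilinForm ℝ (Fin (2*n) → ℝ) :=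
  LinearMap.mk₂ ℝ (Omega n)
    (fun _ _ _ => by
      simp only [Omega, Pi.add_apply, ← Finset.sum_add_distrib]
      exact Finset.sum_congr rfl fun _ _ => by ring)
    (fun _ _ _ => by
      simp only [Omega, Pi.smul_apply, smul_eq_mul, Finset.mul_sum]
      exact Finset.sum_congr rfl fun _ _ => by ring)
    (fun _ _ _ => by
      simp only [Omega, Pi.add_apply, ← Finset.sum_add_distrib]
      exact Finset.sum_congr rfl fun _ _ => by ring)
    (fun _ _ _ => by
      simp only [Omega, Pi.smul_apply, smul_eq_mul, Finset.mul_sum]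
      exact Finset.sum_congr rfl fun _ _ => by ring)

lemma omegaForm_apply (n : ℕ) (x y : Fin (2*n) → ℝ) : omegaForm n x y = Omega n x y := rfl

lemma omegaForm_isAlt (n : ℕ) : (omegaForm n).IsAlt :=
  fun x => (omegaForm_apply n x x).trans <| Finset.sum_eq_zero fun _ _ => by ring

lemma omegaForm_nondegenerate (n : ℕ) : (omegaForm n).Nondegenerate := by
  refine (omegaForm_isAlt n).isRefl.nondegenerate_iff_separatingLeft.2 fun x hx => ?_
  -- `y` is `x` rotated by the complex structure, so `Ω x y` is the sum of squares of `x`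
  set y : Fin (2*n) → ℝ := fun k =>
    if h : (k : ℕ) < n then -x ⟨n + k, by omega⟩ else x ⟨k - n, by omega⟩
  have hsq : ∑ i : Fin n, (x ⟨i, by omega⟩ ^ 2 + x ⟨n + i, by omega⟩ ^ 2) = 0 := by
    rw [← hx y, omegaForm_apply, Omega]
    refine Finset.sum_congr rfl fun i _ => ?_
    simp [y]
    ring
  have hzero i := (add_eq_zero_iff_of_nonneg (sq_nonneg _) (sq_nonneg _)).1
    ((Finset.sum_eq_zero_iff_of_nonneg fun i _ => by positivity).1 hsq i (Finset.mem_univ _))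
  funext k
  by_cases hk : (k : ℕ) < n
  · simpa using (hzero ⟨k, hk⟩).1
  · simpa [Nat.add_sub_cancel' (not_lt.1 hk)] using (hzero ⟨k - n, by omega⟩).2

theorem invariant_ricci_type_is_flat (n : ℕ) (hn : 2 ≤ n)
    (B : (Fin (2*n) → ℝ) →ₗ[ℝ] Module.End ℝ (Fin (2*n) → ℝ))
    (hsym₁ : ∀ X Y Z, Omega n (B X Y) Z = Omega n (B Y X) Z)
    (hsym₂ : ∀ X Y Z, Omega n (B X Y) Z = Omega n (B X Z) Y)
    (hRicci : ∀ X Y Z T,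
      Omega n ((B X * B Y - B Y * B X) Z) T =
        -(1 / (2*((n:ℝ)+1))) *
          (2 * Omega n X Y * LinearMap.trace ℝ _ (B Z * B T)
           + Omega n X Z * LinearMap.trace ℝ _ (B Y * B T)
           + Omega n X T * LinearMap.trace ℝ _ (B Y * B Z)
           - Omega n Y Z * LinearMap.trace ℝ _ (B X * B T)
           - Omega n Y T * LinearMap.trace ℝ _ (B X * B Z))) :
    (∀ X Y, B X * B Y = 0) ∧
    (∀ X Y, B X * B Y - B Y * B X = 0) ∧
    (∀ X Y, LinearMap.trace ℝ _ (B X * B Y) = 0) := by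
  have hc : -(1 / (2 * ((n : ℝ) + 1))) ≠ 0 := neg_ne_zero.2 (by positivity)
  have hdim : 2 < finrank ℝ (Fin (2*n) → ℝ) := by
    rw [Module.finrank_fin_fun]
    omega
  exact InvariantSymplecticConnection.flat_of_isRicciType (omegaForm_nondegenerate n)
    (omegaForm_isAlt n) hsym₁ hsym₂ hRicci hc hdim
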